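/- arXiv:1405.0835 — 2 statements merged into one kernel-verified Lean document; each statement's English description precedes it below -/
import Mathlib

section
/- In a finite Markov chain, if from every state in a set R (closed under reachability from an initial state s ∈ R along R-paths) there is positive probability of reaching the complement ¬R within n+1 steps, where n is the number of states, then the probability of staying in R forever, starting from s, is 0. -/
open Classical

variable {S : Type} [Fintype S]

/-- `stayProb P R n s` is the probability that the first `n` steps of the Markov
chain with transition matrix `P`, started at `s`, stay inside `R` (including the
initial state). -/
noncomputable def stayProb (P : S → S → ℝ) (R : Set S) : ℕ → S → ℝ
  | 0, s => if s ∈ R then 1 else 0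
  | n+1, s => if s ∈ R then ∑ t, P s t * stayProb P R n t else 0

lemma stayProb_nonneg (P : S → S → ℝ) (hP0 : ∀ s t, 0 ≤ P s t) (R : Set S) :
    ∀ n s, 0 ≤ stayProb P R n s := by
  intro n
  induction n with
  | zero => intro s; simp only [stayProb]; positivity
  | succ n ih =>
    intro s
    simp only [stayProb]
    split
    · exact Finset.sum_nonneg fun t _ => mul_nonneg (hP0 s t) (ih t)
    · exact le_refl 0

lemma stayProb_of_not_mem (P : S → S → ℝ) (R : Set S) {t : S} (ht : t ∉ R) :
    ∀ n, stayProb P R n t = 0 := by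
  intro n
  cases n <;> simp [stayProb, ht]

/-- In a finite Markov chain with `n` states, if from every state `t ∈ R`
reachable from `s` along `R`-paths there is positive probability of leaving `R`
within `n+1` steps, then the probability of staying in `R` forever from `s` is
`0`. -/
theorem stay_forever_zero (P : S → S → ℝ)
    (hP0 : ∀ s t, 0 ≤ P s t) (hP1 : ∀ s, ∑ t, P s t = 1)
    (R : Set S) (s : S) (hs : s ∈ R)
    (hleave : ∀ t, Relation.ReflTransGen (fun a b => 0 < P a b ∧ b ∈ R) s t →
      stayProb P R (Fintype.card S + 1) t < 1) :
    (⨅ n, stayProb P R n s) = 0 := by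
  set N := Fintype.card S + 1 with hN
  set Reach : S → Prop := Relation.ReflTransGen (fun a b => 0 < P a b ∧ b ∈ R) s with hReach
  have hnn := stayProb_nonneg P hP0 R
  set F : Finset S := Finset.univ.filter Reach with hF
  have hsF : s ∈ F := Finset.mem_filter.2 ⟨Finset.mem_univ _, Relation.ReflTransGen.refl⟩
  have hne : F.Nonempty := ⟨s, hsF⟩
  set c : ℝ := F.sup' hne (fun t => stayProb P R N t) with hc
  have hc1 : c < 1 := by
    rw [hc, Finset.sup'_lt_iff]
    intro t ht
    exact hleave t (by simpa [hF] using ht)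
  have hc0 : 0 ≤ c := le_trans (hnn N s) (Finset.le_sup' _ hsF)
  -- key claim
  have key : ∀ m t, Reach t → stayProb P R (m + N) t ≤ c * stayProb P R m t := by
    intro m
    induction m with
    | zero =>
      intro t ht
      by_cases htR : t ∈ R
      · have h0 : stayProb P R 0 t = 1 := by simp [stayProb, htR]
        rw [Nat.zero_add, h0, mul_one]
        exact Finset.le_sup' (fun t => stayProb P R N t) (Finset.mem_filter.2 ⟨Finset.mem_univ _, ht⟩)
      · rw [stayProb_of_not_mem P R htR, stayProb_of_not_mem P R htR, mul_zero]
    | succ m ih =>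
      intro t ht
      have hadd : m + 1 + N = (m + N) + 1 := by omega
      rw [hadd]
      by_cases htR : t ∈ R
      · rw [show stayProb P R ((m + N) + 1) t = ∑ u, P t u * stayProb P R (m + N) u from by simp [stayProb, htR],
          show stayProb P R (m + 1) t = ∑ u, P t u * stayProb P R m u from by simp [stayProb, htR],
          Finset.mul_sum]
        apply Finset.sum_le_sum
        intro u _
        rcases eq_or_lt_of_le (hP0 t u) with h | h
        · rw [← h]; simp
        · by_cases huR : u ∈ R
          · have hru : Reach u := Relation.ReflTransGen.tail ht ⟨h, huR⟩
            calc P t u * stayProb P R (m + N) u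
                ≤ P t u * (c * stayProb P R m u) :=
                  mul_le_mul_of_nonneg_left (ih u hru) (hP0 t u)
              _ = c * (P t u * stayProb P R m u) := by ring
          · rw [stayProb_of_not_mem P R huR, mul_zero]
            exact mul_nonneg hc0 (mul_nonneg (hP0 t u) (hnn m u))
      · rw [stayProb_of_not_mem P R htR, stayProb_of_not_mem P R htR, mul_zero]
  -- iterate
  have pow : ∀ k : ℕ, stayProb P R (k * N) s ≤ c ^ k := by
    intro k
    induction k with
    | zero => simp [stayProb, hs]
    | succ k ih =>
      have h1 : (k + 1) * N = k * N + N := by ring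
      rw [h1, pow_succ]
      calc stayProb P R (k * N + N) s ≤ c * stayProb P R (k * N) s :=
            key (k * N) s Relation.ReflTransGen.refl
        _ ≤ c ^ k * c := by
            rw [mul_comm]
            exact mul_le_mul_of_nonneg_right ih hc0
  have hbdd : BddBelow (Set.range fun n => stayProb P R n s) := by
    refine ⟨0, ?_⟩
    rintro x ⟨n, rfl⟩
    exact hnn n s
  refine le_antisymm ?_ (le_ciInf fun n => hnn n s)
  by_contra h
  push_neg at h
  obtain ⟨k, hk⟩ := exists_pow_lt_of_lt_one h hc1
  have h1 : (⨅ n, stayProb P R n s) ≤ stayProb P R (k * N) s := ciInf_le hbdd (k * N)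
  have := h1.trans (pow k)
  linarith
end

section
/- For any finite MDP and atomic proposition r, the set of states satisfying ⟨Positive⟩(□ r) equals the set of states satisfying ⟨Positive⟩(r U ⟨Almost⟩(□ r)): Player 1 can ensure □r with positive probability from s iff Player 1 can with positive probability reach, along r-states, a state from which □r can be ensured with probability 1. -/
open Classical

structure MDP (S A : Type) [Fintype S] where
  isP1 : S → Prop
  Av : S → Finset A
  avNe : ∀ s, isP1 s → (Av s).Nonempty
  δ1 : S → A → S
  δP : S → S → ℝ
  δP_nonneg : ∀ s t, 0 ≤ δP s t
  δP_sum : ∀ s, ¬ isP1 s → ∑ t, δP s t = 1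

variable {S A : Type} [Fintype S]

structure Strat (M : MDP S A) where
  act : S → List S → A
  mem : ∀ s h, act s h ∈ M.Av s

noncomputable def nextD (M : MDP S A) (σ : Strat M) (h : List S) (s t : S) : ℝ :=
  if M.isP1 s then (if t = M.δ1 s (σ.act s h) then 1 else 0) else M.δP s t

noncomputable def prU (M : MDP S A) (q r : S → Prop) (σ : Strat M) :
    ℕ → List S → S → ℝ
  | 0, _, s => if r s then 1 else 0
  | n+1, h, s =>
      if r s then 1 else
      if q s then ∑ t, nextD M σ h s t * prU M q r σ n (s :: h) t else 0

noncomputable def prSafe (M : MDP S A) (q : S → Prop) (σ : Strat M) :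
    ℕ → List S → S → ℝ
  | 0, _, s => if q s then 1 else 0
  | n+1, h, s =>
      if q s then ∑ t, nextD M σ h s t * prSafe M q σ n (s :: h) t else 0

/-- Probability that the play from `s` under `σ` satisfies `q U r`. -/
noncomputable def PrUntil (M : MDP S A) (q r : S → Prop) (σ : Strat M) (s : S) : ℝ :=
  ⨆ n, prU M q r σ n [] s

/-- Probability that the play from `s` under `σ` satisfies `□ q`. -/
noncomputable def PrGlob (M : MDP S A) (q : S → Prop) (σ : Strat M) (s : S) : ℝ :=
  ⨅ n, prSafe M q σ n [] s

/-- Probability of the weak until `q W r ≡ (q U r) ∨ □ q`. -/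
noncomputable def PrWeakUntil (M : MDP S A) (q r : S → Prop) (σ : Strat M) (s : S) : ℝ :=
  PrUntil M q r σ s + PrGlob M (fun t => q t ∧ ¬ r t) σ s

/-- `s ⊨ ⟨Positive⟩(□ r)`. -/
def PositiveGlob (M : MDP S A) (r : S → Prop) (s : S) : Prop :=
  ∃ σ : Strat M, 0 < PrGlob M r σ s

/-- `s ⊨ ⟨Almost⟩(□ r)`. -/
def AlmostGlob (M : MDP S A) (r : S → Prop) (s : S) : Prop :=
  ∃ σ : Strat M, PrGlob M r σ s = 1

/-- `s ⊨ ⟨Positive⟩(q U ψ)` for a state-set target `ψ`. -/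
def PositiveUntil (M : MDP S A) (q ψ : S → Prop) (s : S) : Prop :=
  ∃ σ : Strat M, 0 < PrUntil M q ψ σ s

lemma nextD_nonneg (M : MDP S A) (σ : Strat M) (h : List S) (s t : S) :
    0 ≤ nextD M σ h s t := by
  unfold nextD
  split_ifs
  · norm_num
  · norm_num
  · exact M.δP_nonneg s t

lemma nextD_sum (M : MDP S A) (σ : Strat M) (h : List S) (s : S) :
    ∑ t, nextD M σ h s t = 1 := by
  by_cases h1 : M.isP1 s
  · simp [nextD, h1]
  · simp only [nextD, if_neg h1]
    exact M.δP_sum s h1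

lemma nextD_le_one (M : MDP S A) (σ : Strat M) (h : List S) (s t : S) :
    nextD M σ h s t ≤ 1 := by
  have := Finset.single_le_sum (f := fun u => nextD M σ h s u)
    (fun u _ => nextD_nonneg M σ h s u) (Finset.mem_univ t)
  rw [nextD_sum M σ h s] at this
  exact this

lemma prSafe_nonneg (M : MDP S A) (q : S → Prop) (σ : Strat M) :
    ∀ (n : ℕ) (h : List S) (s : S), 0 ≤ prSafe M q σ n h s := by
  intro n
  induction n with
  | zero => intro h s; simp only [prSafe]; split_ifs <;> norm_num
  | succ n ih =>
      intro h s
      simp only [prSafe]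
      split_ifs
      · exact Finset.sum_nonneg fun t _ =>
          mul_nonneg (nextD_nonneg M σ h s t) (ih (s :: h) t)
      · exact le_rfl

lemma prSafe_le_one (M : MDP S A) (q : S → Prop) (σ : Strat M) :
    ∀ (n : ℕ) (h : List S) (s : S), prSafe M q σ n h s ≤ 1 := by
  intro n
  induction n with
  | zero => intro h s; simp only [prSafe]; split_ifs <;> norm_num
  | succ n ih =>
      intro h s
      simp only [prSafe]
      split_ifs
      · calc ∑ t, nextD M σ h s t * prSafe M q σ n (s :: h) t
            ≤ ∑ t, nextD M σ h s t * 1 := Finset.sum_le_sum fun t _ =>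
              mul_le_mul_of_nonneg_left (ih (s :: h) t) (nextD_nonneg M σ h s t)
          _ = 1 := by simp [nextD_sum M σ h s]
      · norm_num

lemma prSafe_eq_zero (M : MDP S A) (q : S → Prop) (σ : Strat M)
    (n : ℕ) (h : List S) (s : S) (hq : ¬ q s) : prSafe M q σ n h s = 0 := by
  cases n <;> simp [prSafe, hq]

lemma prSafe_succ_le (M : MDP S A) (q : S → Prop) (σ : Strat M) :
    ∀ (n : ℕ) (h : List S) (s : S), prSafe M q σ (n + 1) h s ≤ prSafe M q σ n h s := by
  intro n
  induction n with
  | zero =>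
      intro h s
      simp only [prSafe]
      split_ifs with hq
      · calc ∑ t, nextD M σ h s t * (if q t then (1:ℝ) else 0)
            ≤ ∑ t, nextD M σ h s t * 1 := Finset.sum_le_sum fun t _ => by
              apply mul_le_mul_of_nonneg_left _ (nextD_nonneg M σ h s t)
              split_ifs <;> norm_num
          _ = 1 := by simp [nextD_sum M σ h s]
      · exact le_rfl
  | succ n ih =>
      intro h s
      simp only [prSafe]
      split_ifs
      · exact Finset.sum_le_sum fun t _ =>
          mul_le_mul_of_nonneg_left (ih (s :: h) t) (nextD_nonneg M σ h s t)
      · exact le_rfl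

lemma prSafe_anti (M : MDP S A) (q : S → Prop) (σ : Strat M)
    (h : List S) (s : S) {m n : ℕ} (hmn : m ≤ n) :
    prSafe M q σ n h s ≤ prSafe M q σ m h s := by
  induction n with
  | zero => simp_all
  | succ n ih =>
      rcases Nat.lt_or_ge m (n+1) with hlt | hge
      · exact (prSafe_succ_le M q σ n h s).trans (ih (Nat.lt_succ_iff.mp hlt))
      · have : m = n + 1 := le_antisymm hmn hge
        subst this; exact le_rfl

lemma prSafe_mono_pred (M : MDP S A) (q q' : S → Prop) (σ : Strat M)
    (hqq : ∀ t, q t → q' t) :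
    ∀ (n : ℕ) (h : List S) (s : S), prSafe M q σ n h s ≤ prSafe M q' σ n h s := by
  intro n
  induction n with
  | zero =>
      intro h s; simp only [prSafe]
      split_ifs with h1 h2
      · exact le_rfl
      · exact absurd (hqq s h1) h2
      · norm_num
      · exact le_rfl
  | succ n ih =>
      intro h s; simp only [prSafe]
      split_ifs with h1 h2
      · exact Finset.sum_le_sum fun t _ =>
          mul_le_mul_of_nonneg_left (ih (s :: h) t) (nextD_nonneg M σ h s t)
      · exact absurd (hqq s h1) h2
      · exact Finset.sum_nonneg fun t _ =>
          mul_nonneg (nextD_nonneg M σ h s t) (prSafe_nonneg M q' σ n (s :: h) t)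
      · exact le_rfl

lemma prU_nonneg (M : MDP S A) (q ψ : S → Prop) (σ : Strat M) :
    ∀ (n : ℕ) (h : List S) (s : S), 0 ≤ prU M q ψ σ n h s := by
  intro n
  induction n with
  | zero => intro h s; simp only [prU]; split_ifs <;> norm_num
  | succ n ih =>
      intro h s; simp only [prU]
      split_ifs
      · norm_num
      · exact Finset.sum_nonneg fun t _ =>
          mul_nonneg (nextD_nonneg M σ h s t) (ih (s :: h) t)
      · exact le_rfl

lemma prU_le_one (M : MDP S A) (q ψ : S → Prop) (σ : Strat M) :
    ∀ (n : ℕ) (h : List S) (s : S), prU M q ψ σ n h s ≤ 1 := by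
  intro n
  induction n with
  | zero => intro h s; simp only [prU]; split_ifs <;> norm_num
  | succ n ih =>
      intro h s; simp only [prU]
      split_ifs
      · exact le_rfl
      · calc ∑ t, nextD M σ h s t * prU M q ψ σ n (s :: h) t
            ≤ ∑ t, nextD M σ h s t * 1 := Finset.sum_le_sum fun t _ =>
              mul_le_mul_of_nonneg_left (ih (s :: h) t) (nextD_nonneg M σ h s t)
          _ = 1 := by simp [nextD_sum M σ h s]
      · norm_num

lemma prU_mono_target (M : MDP S A) (q ψ ψ' : S → Prop) (σ : Strat M)
    (hψ : ∀ t, ψ t → ψ' t) :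
    ∀ (n : ℕ) (h : List S) (s : S), prU M q ψ σ n h s ≤ prU M q ψ' σ n h s := by
  intro n
  induction n with
  | zero =>
      intro h s; simp only [prU]
      split_ifs with h1 h2
      · exact le_rfl
      · exact absurd (hψ s h1) h2
      · norm_num
      · exact le_rfl
  | succ n ih =>
      intro h s
      by_cases h2 : ψ' s
      · have he : prU M q ψ' σ (n+1) h s = 1 := by simp [prU, h2]
        rw [he]; exact prU_le_one M q ψ σ (n+1) h s
      · have h1 : ¬ ψ s := fun hh => h2 (hψ s hh)
        simp only [prU, if_neg h1, if_neg h2]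
        split_ifs
        · exact Finset.sum_le_sum fun t _ =>
            mul_le_mul_of_nonneg_left (ih (s :: h) t) (nextD_nonneg M σ h s t)
        · exact le_rfl
lemma PrGlob_nonneg (M : MDP S A) (q : S → Prop) (σ : Strat M) (s : S) :
    0 ≤ PrGlob M q σ s :=
  Real.iInf_nonneg fun n => prSafe_nonneg M q σ n [] s

lemma PrGlob_le_prSafe (M : MDP S A) (q : S → Prop) (σ : Strat M) (s : S) (n : ℕ) :
    PrGlob M q σ s ≤ prSafe M q σ n [] s :=
  ciInf_le ⟨0, fun x ⟨n, hn⟩ => hn ▸ prSafe_nonneg M q σ n [] s⟩ n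

lemma PrGlob_le_one (M : MDP S A) (q : S → Prop) (σ : Strat M) (s : S) :
    PrGlob M q σ s ≤ 1 :=
  (PrGlob_le_prSafe M q σ s 0).trans (prSafe_le_one M q σ 0 [] s)

lemma prU_le_PrUntil (M : MDP S A) (q ψ : S → Prop) (σ : Strat M) (s : S) (n : ℕ) :
    prU M q ψ σ n [] s ≤ PrUntil M q ψ σ s :=
  le_ciSup (f := fun n => prU M q ψ σ n [] s)
    ⟨1, by rintro x ⟨n, rfl⟩; exact prU_le_one M q ψ σ n [] s⟩ n

lemma PrUntil_mono_target (M : MDP S A) (q ψ ψ' : S → Prop) (σ : Strat M) (s : S)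
    (hψ : ∀ t, ψ t → ψ' t) : PrUntil M q ψ σ s ≤ PrUntil M q ψ' σ s :=
  ciSup_le fun n => (prU_mono_target M q ψ ψ' σ hψ n [] s).trans
    (prU_le_PrUntil M q ψ' σ s n)

/-- The `n`-step safety value (sup over strategies and histories). -/
noncomputable def vN (M : MDP S A) (r : S → Prop) (n : ℕ) (t : S) : ℝ :=
  sSup {x | ∃ (σ : Strat M) (h : List S), prSafe M r σ n h t = x}

lemma vN_nonneg (M : MDP S A) (r : S → Prop) (n : ℕ) (t : S) : 0 ≤ vN M r n t :=
  Real.sSup_nonneg fun x ⟨σ, h, hx⟩ => hx ▸ prSafe_nonneg M r σ n h t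

lemma vN_le_one (M : MDP S A) (r : S → Prop) (n : ℕ) (t : S) : vN M r n t ≤ 1 :=
  Real.sSup_le (fun x ⟨σ, h, hx⟩ => hx ▸ prSafe_le_one M r σ n h t) zero_le_one

lemma prSafe_le_vN (M : MDP S A) (r : S → Prop) (σ : Strat M) (n : ℕ) (h : List S) (t : S) :
    prSafe M r σ n h t ≤ vN M r n t :=
  le_csSup ⟨1, fun x ⟨σ', h', hx⟩ => hx ▸ prSafe_le_one M r σ' n h' t⟩ ⟨σ, h, rfl⟩

lemma vN_anti (M : MDP S A) (r : S → Prop) (t : S) {m n : ℕ} (hmn : m ≤ n) :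
    vN M r n t ≤ vN M r m t :=
  Real.sSup_le (fun x ⟨σ, h, hx⟩ => hx ▸ (prSafe_anti M r σ h t hmn).trans
    (prSafe_le_vN M r σ m h t)) (vN_nonneg M r m t)

/-- The value-iteration limit. -/
noncomputable def vInf (M : MDP S A) (r : S → Prop) (t : S) : ℝ :=
  ⨅ n, vN M r n t

lemma vInf_le_vN (M : MDP S A) (r : S → Prop) (t : S) (n : ℕ) :
    vInf M r t ≤ vN M r n t :=
  ciInf_le ⟨0, fun x ⟨n, hn⟩ => hn ▸ vN_nonneg M r n t⟩ n

lemma vInf_le_one (M : MDP S A) (r : S → Prop) (t : S) : vInf M r t ≤ 1 :=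
  (vInf_le_vN M r t 0).trans (vN_le_one M r 0 t)

/-- States from which safety value-iteration stays at `1`. -/
def Uset (M : MDP S A) (r : S → Prop) (t : S) : Prop := vInf M r t = 1

lemma Uset_r (M : MDP S A) (r : S → Prop) {u : S} (hu : Uset M r u) : r u := by
  by_contra hr
  have h1 : vN M r 0 u ≤ 0 :=
    Real.sSup_le (by rintro x ⟨σ, h, rfl⟩; simp [prSafe, hr]) le_rfl
  have := vInf_le_vN M r u 0
  rw [hu] at this
  linarith
lemma vN_one_le_Uset (M : MDP S A) (r : S → Prop) {u : S} (hu : Uset M r u) (n : ℕ) :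
    1 ≤ vN M r n u := by
  have := vInf_le_vN M r u n
  rw [hu] at this
  exact this

lemma vN_succ_le_P1 (M : MDP S A) (r : S → Prop) (n : ℕ) {u : S} (hP : M.isP1 u) :
    vN M r (n+1) u ≤ (M.Av u).sup' (M.avNe u hP) (fun a => vN M r n (M.δ1 u a)) := by
  obtain ⟨a0, ha0⟩ := M.avNe u hP
  have hnn : (0:ℝ) ≤ (M.Av u).sup' (M.avNe u hP) (fun a => vN M r n (M.δ1 u a)) :=
    le_trans (vN_nonneg M r n (M.δ1 u a0)) (Finset.le_sup' (fun a => vN M r n (M.δ1 u a)) ha0)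
  apply Real.sSup_le _ hnn
  rintro x ⟨σ, h, rfl⟩
  simp only [prSafe]
  split_ifs with hr
  · have hsum : ∑ t, nextD M σ h u t * prSafe M r σ n (u :: h) t
        = prSafe M r σ n (u :: h) (M.δ1 u (σ.act u h)) := by
      simp [nextD, if_pos hP, ite_mul, Finset.sum_ite_eq']
    rw [hsum]
    exact (prSafe_le_vN M r σ n (u :: h) _).trans (Finset.le_sup' (fun a => vN M r n (M.δ1 u a)) (σ.mem u h))
  · exact hnn

lemma vN_succ_le_prob (M : MDP S A) (r : S → Prop) (n : ℕ) {u : S} (hP : ¬ M.isP1 u) :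
    vN M r (n+1) u ≤ ∑ t, M.δP u t * vN M r n t := by
  have hnn : (0:ℝ) ≤ ∑ t, M.δP u t * vN M r n t :=
    Finset.sum_nonneg fun t _ => mul_nonneg (M.δP_nonneg u t) (vN_nonneg M r n t)
  apply Real.sSup_le _ hnn
  rintro x ⟨σ, h, rfl⟩
  simp only [prSafe]
  split_ifs with hr
  · simp only [nextD, if_neg hP]
    exact Finset.sum_le_sum fun t _ =>
      mul_le_mul_of_nonneg_left (prSafe_le_vN M r σ n (u :: h) t) (M.δP_nonneg u t)
  · exact hnn

lemma Uset_P1 (M : MDP S A) (r : S → Prop) {u : S} (hu : Uset M r u) (hP : M.isP1 u) :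
    ∃ a ∈ M.Av u, Uset M r (M.δ1 u a) := by
  by_contra hcon
  push_neg at hcon
  have h1 : ∀ a : A, ∃ n : ℕ, a ∈ M.Av u → vN M r n (M.δ1 u a) < 1 := by
    intro a
    by_cases ha : a ∈ M.Av u
    · have hne : vInf M r (M.δ1 u a) ≠ 1 := hcon a ha
      have hlt : vInf M r (M.δ1 u a) < 1 :=
        lt_of_le_of_ne (vInf_le_one M r _) hne
      by_contra hn
      push_neg at hn
      have : (1:ℝ) ≤ vInf M r (M.δ1 u a) :=
        le_ciInf fun n => (hn n).2
      linarith
    · exact ⟨0, fun h => absurd h ha⟩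
  choose g hg using h1
  set Nm := (M.Av u).sup g with hNm
  have hall : ∀ a ∈ M.Av u, vN M r Nm (M.δ1 u a) < 1 := fun a ha =>
    lt_of_le_of_lt (vN_anti M r _ (Finset.le_sup ha)) (hg a ha)
  have hub := vN_succ_le_P1 M r Nm hP
  have hlt : (M.Av u).sup' (M.avNe u hP) (fun a => vN M r Nm (M.δ1 u a)) < 1 :=
    (Finset.sup'_lt_iff (M.avNe u hP)).mpr hall
  have := vN_one_le_Uset M r hu (Nm + 1)
  linarith

lemma Uset_prob (M : MDP S A) (r : S → Prop) {u : S} (hu : Uset M r u) (hP : ¬ M.isP1 u)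
    {t : S} (ht : 0 < M.δP u t) : Uset M r t := by
  have key : ∀ n, vN M r n t = 1 := by
    intro n
    have h1 := (vN_one_le_Uset M r hu (n+1)).trans (vN_succ_le_prob M r n hP)
    have hsum0 : ∑ x, M.δP u x * (1 - vN M r n x) ≤ 0 := by
      have hexp : ∑ x, M.δP u x * (1 - vN M r n x)
          = (∑ x, M.δP u x) - ∑ x, M.δP u x * vN M r n x := by
        rw [← Finset.sum_sub_distrib]
        exact Finset.sum_congr rfl fun x _ => by ring
      rw [hexp, M.δP_sum u hP]
      linarith
    have hnn : ∀ x ∈ Finset.univ, (0:ℝ) ≤ M.δP u x * (1 - vN M r n x) := fun x _ =>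
      mul_nonneg (M.δP_nonneg u x) (by linarith [vN_le_one M r n x])
    have hzero : ∑ x, M.δP u x * (1 - vN M r n x) = 0 :=
      le_antisymm hsum0 (Finset.sum_nonneg hnn)
    have heach := (Finset.sum_eq_zero_iff_of_nonneg hnn).mp hzero t (Finset.mem_univ t)
    have : (1 - vN M r n t) = 0 := by
      rcases mul_eq_zero.mp heach with h | h
      · exact absurd h (ne_of_gt ht)
      · exact h
    linarith [this]
  exact le_antisymm (vInf_le_one M r t) (le_ciInf fun n => (key n).ge)

lemma Uset_almost (M : MDP S A) (r : S → Prop) (σ0 : Strat M) {u : S}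
    (hu : Uset M r u) : AlmostGlob M r u := by
  have hchoice : ∀ v : S, ∃ a : A, a ∈ M.Av v ∧
      (M.isP1 v → Uset M r v → Uset M r (M.δ1 v a)) := by
    intro v
    by_cases hP : M.isP1 v
    · by_cases hUv : Uset M r v
      · obtain ⟨a, ha, hUa⟩ := Uset_P1 M r hUv hP
        exact ⟨a, ha, fun _ _ => hUa⟩
      · obtain ⟨a, ha⟩ := M.avNe v hP
        exact ⟨a, ha, fun _ hh => absurd hh hUv⟩
    · exact ⟨σ0.act v [], σ0.mem v [], fun hh => absurd hh hP⟩
  choose f hf1 hf2 using hchoice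
  let σU : Strat M := ⟨fun v _ => f v, fun v _ => hf1 v⟩
  have key : ∀ (n : ℕ) (h : List S) (v : S), Uset M r v → prSafe M r σU n h v = 1 := by
    intro n
    induction n with
    | zero => intro h v hv; simp [prSafe, Uset_r M r hv]
    | succ n ih =>
        intro h v hv
        have hr := Uset_r M r hv
        simp only [prSafe, if_pos hr]
        by_cases hP : M.isP1 v
        · have hs : ∑ t, nextD M σU h v t * prSafe M r σU n (v :: h) t
              = prSafe M r σU n (v :: h) (M.δ1 v (f v)) := by
            have hact : σU.act v h = f v := rfl
            simp [nextD, if_pos hP, hact, ite_mul, Finset.sum_ite_eq']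
          rw [hs, ih (v :: h) _ (hf2 v hP hv)]
        · have hs : ∀ t, nextD M σU h v t * prSafe M r σU n (v :: h) t = M.δP v t := by
            intro t
            simp only [nextD, if_neg hP]
            rcases eq_or_lt_of_le (M.δP_nonneg v t) with h0 | h0
            · rw [← h0]; ring
            · rw [ih (v :: h) t (Uset_prob M r hv hP h0), mul_one]
          rw [Finset.sum_congr rfl (fun t _ => hs t)]
          exact M.δP_sum v hP
  refine ⟨σU, ?_⟩
  have : (fun n => prSafe M r σU n [] u) = fun _ => (1:ℝ) :=
    funext fun n => key n [] u hu
  rw [PrGlob, this]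
  exact ciInf_const
lemma prSafe_decomp (M : MDP S A) (r U : S → Prop) (σ : Strat M) :
    ∀ (n : ℕ) (h : List S) (s : S),
      prSafe M r σ n h s ≤ prU M r U σ n h s
        + prSafe M (fun t => r t ∧ ¬ U t) σ n h s := by
  intro n
  induction n with
  | zero =>
      intro h s
      simp only [prSafe, prU]
      by_cases hU : U s
      · by_cases hr : r s <;> simp [hU, hr]
      · by_cases hr : r s <;> simp [hU, hr]
  | succ n ih =>
      intro h s
      by_cases hU : U s
      · have h1 : prU M r U σ (n+1) h s = 1 := by simp [prU, hU]
        rw [h1]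
        have := prSafe_le_one M r σ (n+1) h s
        have := prSafe_nonneg M (fun t => r t ∧ ¬ U t) σ (n+1) h s
        linarith
      · by_cases hr : r s
        · simp only [prSafe, prU, if_pos hr, if_neg hU, if_pos (show r s ∧ ¬ U s from ⟨hr, hU⟩)]
          rw [← Finset.sum_add_distrib]
          apply Finset.sum_le_sum
          intro t _
          rw [← mul_add]
          exact mul_le_mul_of_nonneg_left (ih (s :: h) t) (nextD_nonneg M σ h s t)
        · have h0 : prSafe M r σ (n+1) h s = 0 := prSafe_eq_zero M r σ (n+1) h s hr
          rw [h0]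
          have := prU_nonneg M r U σ (n+1) h s
          have := prSafe_nonneg M (fun t => r t ∧ ¬ U t) σ (n+1) h s
          linarith

lemma prSafe_contract (M : MDP S A) (q : S → Prop) (m : ℕ) (β : ℝ) (hβ : 0 ≤ β)
    (hm : ∀ (σ : Strat M) (h : List S) (t : S), prSafe M q σ m h t ≤ β) :
    ∀ (n : ℕ) (σ : Strat M) (h : List S) (u : S),
      prSafe M q σ (n + m) h u ≤ β * prSafe M q σ n h u := by
  intro n
  induction n with
  | zero =>
      intro σ h u
      by_cases hq : q u
      · simpa [prSafe, hq] using hm σ h u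
      · rw [prSafe_eq_zero M q σ (0 + m) h u hq, prSafe_eq_zero M q σ 0 h u hq, mul_zero]
  | succ n ih =>
      intro σ h u
      have hrw : n + 1 + m = (n + m) + 1 := by omega
      rw [hrw]
      simp only [prSafe]
      split_ifs
      · rw [Finset.mul_sum]
        apply Finset.sum_le_sum
        intro t _
        calc nextD M σ h u t * prSafe M q σ (n + m) (u :: h) t
            ≤ nextD M σ h u t * (β * prSafe M q σ n (u :: h) t) :=
              mul_le_mul_of_nonneg_left (ih σ (u :: h) t) (nextD_nonneg M σ h u t)
          _ = β * (nextD M σ h u t * prSafe M q σ n (u :: h) t) := by ring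
      · rw [mul_zero]

lemma prSafe_pow (M : MDP S A) (q : S → Prop) (m : ℕ) (β : ℝ) (hβ : 0 ≤ β)
    (hm : ∀ (σ : Strat M) (h : List S) (t : S), prSafe M q σ m h t ≤ β) :
    ∀ (k : ℕ) (σ : Strat M) (h : List S) (u : S), prSafe M q σ (k * m) h u ≤ β ^ k := by
  intro k
  induction k with
  | zero =>
      intro σ h u
      rw [Nat.zero_mul, pow_zero]
      exact prSafe_le_one M q σ 0 h u
  | succ k ih =>
      intro σ h u
      have hrw : (k + 1) * m = k * m + m := by ring
      rw [hrw, pow_succ]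
      calc prSafe M q σ (k * m + m) h u ≤ β * prSafe M q σ (k * m) h u :=
            prSafe_contract M q m β hβ hm (k * m) σ h u
        _ ≤ β * β ^ k := mul_le_mul_of_nonneg_left (ih σ h u) hβ
        _ = β ^ k * β := by ring

lemma glob_le_until (M : MDP S A) (r : S → Prop) (σ : Strat M) (s : S) :
    PrGlob M r σ s ≤ PrUntil M r (Uset M r) σ s := by
  classical
  set q : S → Prop := fun t => r t ∧ ¬ Uset M r t with hq
  -- choose a uniform horizon N
  have hex : ∀ t : S, ∃ n : ℕ, ¬ Uset M r t → vN M r n t < 1 := by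
    intro t
    by_cases hU : Uset M r t
    · exact ⟨0, fun h => absurd hU h⟩
    · have hlt : vInf M r t < 1 := lt_of_le_of_ne (vInf_le_one M r t) hU
      by_contra hn
      push_neg at hn
      have : (1:ℝ) ≤ vInf M r t := le_ciInf fun n => (hn n).2
      linarith
  choose f hf using hex
  set N := Finset.univ.sup f with hN
  have hfN : ∀ t : S, ¬ Uset M r t → vN M r N t < 1 := fun t ht =>
    lt_of_le_of_lt (vN_anti M r t (Finset.le_sup (Finset.mem_univ t))) (hf t ht)
  -- the contraction constant
  set Fs : Finset ℝ :=
    insert 0 ((Finset.univ.filter fun t : S => ¬ Uset M r t).image (vN M r N)) with hFs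
  have hFne : Fs.Nonempty := ⟨0, Finset.mem_insert_self 0 _⟩
  set β := Fs.max' hFne with hβ
  have hβ0 : (0:ℝ) ≤ β := Finset.le_max' Fs 0 (Finset.mem_insert_self 0 _)
  have hβ1 : β < 1 := by
    rw [hβ]
    apply (Finset.max'_lt_iff Fs hFne).mpr
    intro b hb
    rcases Finset.mem_insert.mp hb with rfl | hb
    · norm_num
    · obtain ⟨t, ht, rfl⟩ := Finset.mem_image.mp hb
      exact hfN t (Finset.mem_filter.mp ht).2
  have hbound : ∀ (σ' : Strat M) (h' : List S) (t : S), prSafe M q σ' N h' t ≤ β := by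
    intro σ' h' t
    by_cases hU : Uset M r t
    · have : ¬ q t := fun hqt => hqt.2 hU
      rw [prSafe_eq_zero M q σ' N h' t this]
      exact hβ0
    · calc prSafe M q σ' N h' t ≤ prSafe M r σ' N h' t :=
            prSafe_mono_pred M q r σ' (fun t ht => ht.1) N h' t
        _ ≤ vN M r N t := prSafe_le_vN M r σ' N h' t
        _ ≤ β := Finset.le_max' Fs _ (Finset.mem_insert_of_mem
            (Finset.mem_image_of_mem _ (Finset.mem_filter.mpr ⟨Finset.mem_univ t, hU⟩)))
  -- PrGlob for q is zero
  have hqzero : PrGlob M q σ s ≤ 0 := by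
    have hpow : ∀ k : ℕ, PrGlob M q σ s ≤ β ^ k := fun k =>
      (PrGlob_le_prSafe M q σ s (k * N)).trans
        (prSafe_pow M q N β hβ0 hbound k σ [] s)
    exact ge_of_tendsto (tendsto_pow_atTop_nhds_zero_of_lt_one hβ0 hβ1)
      (Filter.Eventually.of_forall hpow)
  -- decomposition
  have hdec : ∀ n : ℕ, PrGlob M r σ s - PrUntil M r (Uset M r) σ s ≤ prSafe M q σ n [] s := by
    intro n
    have h1 := PrGlob_le_prSafe M r σ s n
    have h2 := prSafe_decomp M r (Uset M r) σ n [] s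
    have h3 := prU_le_PrUntil M r (Uset M r) σ s n
    linarith
  have : PrGlob M r σ s - PrUntil M r (Uset M r) σ s ≤ PrGlob M q σ s :=
    le_ciInf hdec
  linarith
lemma until_pos_to_glob_pos (M : MDP S A) (r : S → Prop) :
    ∀ (n : ℕ) (σ : Strat M) (h : List S) (s : S),
      0 < prU M r (AlmostGlob M r) σ n h s → ∃ τ : Strat M, 0 < PrGlob M r τ s := by
  intro n
  induction n with
  | zero =>
      intro σ h s hpos
      have hA : AlmostGlob M r s := by
        by_contra hA
        simp [prU, hA] at hpos
      obtain ⟨τ, hτ⟩ := hA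
      exact ⟨τ, by rw [hτ]; norm_num⟩
  | succ n ih =>
      intro σ h s hpos
      by_cases hA : AlmostGlob M r s
      · obtain ⟨τ, hτ⟩ := hA
        exact ⟨τ, by rw [hτ]; norm_num⟩
      · have hr : r s := by
          by_contra hr
          simp [prU, hA, hr] at hpos
        rw [show prU M r (AlmostGlob M r) σ (n+1) h s
            = ∑ t, nextD M σ h s t * prU M r (AlmostGlob M r) σ n (s :: h) t from by
          simp [prU, hA, hr]] at hpos
        obtain ⟨t₀, ht₀⟩ : ∃ t, 0 < nextD M σ h s t * prU M r (AlmostGlob M r) σ n (s :: h) t := by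
          by_contra hc
          push_neg at hc
          have := Finset.sum_nonpos (fun t (_ : t ∈ Finset.univ) => hc t)
          linarith
        have h1 := nextD_nonneg M σ h s t₀
        have h2 := prU_nonneg M r (AlmostGlob M r) σ n (s :: h) t₀
        have hnd : 0 < nextD M σ h s t₀ := by
          rcases h1.lt_or_eq with hx | hx
          · exact hx
          · rw [← hx, zero_mul] at ht₀; linarith
        have hpu : 0 < prU M r (AlmostGlob M r) σ n (s :: h) t₀ := by
          rcases h2.lt_or_eq with hx | hx
          · exact hx
          · rw [← hx, mul_zero] at ht₀; linarith
        obtain ⟨τ, hτ⟩ := ih σ (s :: h) t₀ hpu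
        let σ' : Strat M := ⟨fun u l => if l = [] then σ.act u h else τ.act u l.dropLast, by
          intro u l
          by_cases hl : l = [] <;> simp [hl, σ.mem, τ.mem]⟩
        have hshift : ∀ (n' : ℕ) (l : List S) (t : S),
            prSafe M r σ' n' (l ++ [s]) t = prSafe M r τ n' l t := by
          intro n'
          induction n' with
          | zero => intro l t; simp [prSafe]
          | succ n' ih2 =>
              intro l t
              simp only [prSafe]
              split_ifs with hrt
              · apply Finset.sum_congr rfl
                intro x _
                have hne : l ++ [s] ≠ [] := by simp
                have hact : σ'.act t (l ++ [s]) = τ.act t l := by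
                  show (if l ++ [s] = [] then σ.act t h else τ.act t (l ++ [s]).dropLast)
                      = τ.act t l
                  rw [if_neg hne, List.dropLast_concat]
                have hnd' : nextD M σ' (l ++ [s]) t x = nextD M τ l t x := by
                  simp [nextD, hact]
                rw [hnd', show t :: (l ++ [s]) = (t :: l) ++ [s] from rfl, ih2]
              · rfl
        have hc1 : nextD M σ' [] s t₀ = nextD M σ h s t₀ := by
          have hact : σ'.act s [] = σ.act s h := rfl
          simp [nextD, hact]
        have hPg0 : 0 ≤ PrGlob M r τ t₀ := PrGlob_nonneg M r τ t₀
        have hPg1 : PrGlob M r τ t₀ ≤ 1 := PrGlob_le_one M r τ t₀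
        refine ⟨σ', ?_⟩
        have hlow : ∀ n' : ℕ, nextD M σ h s t₀ * PrGlob M r τ t₀ ≤ prSafe M r σ' n' [] s := by
          intro n'
          cases n' with
          | zero =>
              have : prSafe M r σ' 0 [] s = 1 := by simp [prSafe, hr]
              rw [this]
              exact mul_le_one₀ (nextD_le_one M σ h s t₀) hPg0 hPg1
          | succ n' =>
              have hstep : nextD M σ' [] s t₀ * prSafe M r σ' n' [s] t₀
                  ≤ prSafe M r σ' (n'+1) [] s := by
                simp only [prSafe, if_pos hr]
                exact Finset.single_le_sum
                  (f := fun t => nextD M σ' [] s t * prSafe M r σ' n' (s :: []) t)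
                  (fun t _ => mul_nonneg (nextD_nonneg M σ' [] s t)
                    (prSafe_nonneg M r σ' n' (s :: []) t)) (Finset.mem_univ t₀)
              have heq : prSafe M r σ' n' [s] t₀ = prSafe M r τ n' [] t₀ := by
                have := hshift n' [] t₀
                simpa using this
              calc nextD M σ h s t₀ * PrGlob M r τ t₀
                  ≤ nextD M σ h s t₀ * prSafe M r τ n' [] t₀ :=
                    mul_le_mul_of_nonneg_left (PrGlob_le_prSafe M r τ t₀ n') h1
                _ = nextD M σ' [] s t₀ * prSafe M r σ' n' [s] t₀ := by rw [hc1, heq]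
                _ ≤ prSafe M r σ' (n'+1) [] s := hstep
        have hfin : nextD M σ h s t₀ * PrGlob M r τ t₀ ≤ PrGlob M r σ' s := le_ciInf hlow
        have hposc : 0 < nextD M σ h s t₀ * PrGlob M r τ t₀ := mul_pos hnd hτ
        linarith

/-- `⟦⟨Positive⟩(□ r)⟧ = ⟦⟨Positive⟩(r U ⟨Almost⟩(□ r))⟧`: Player 1 can ensure
`□ r` with positive probability from `s` iff Player 1 can, with positive
probability, reach along `r`-states a state from which `□ r` can be ensured
almost surely. -/
theorem positive_glob_eq_positive_until_almost_glob
    (M : MDP S A) (r : S → Prop) :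
    {s : S | PositiveGlob M r s} =
      {s : S | PositiveUntil M r (AlmostGlob M r) s} := by
  ext s
  simp only [Set.mem_setOf_eq, PositiveGlob, PositiveUntil]
  constructor
  · rintro ⟨σ, hσ⟩
    refine ⟨σ, lt_of_lt_of_le hσ ?_⟩
    exact (glob_le_until M r σ s).trans
      (PrUntil_mono_target M r (Uset M r) (AlmostGlob M r) σ s
        (fun t ht => Uset_almost M r σ ht))
  · rintro ⟨σ, hσ⟩
    obtain ⟨n, hn⟩ : ∃ n, 0 < prU M r (AlmostGlob M r) σ n [] s := by
      by_contra hc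
      push_neg at hc
      have hle : PrUntil M r (AlmostGlob M r) σ s ≤ 0 := Real.iSup_nonpos hc
      linarith
    exact until_pos_to_glob_pos M r n σ [] s hn
end
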